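/- Let 1 ≤ i ≤ g − 2 and let S : H → H be the ℚ-linear map determined by S(b_1) = b_1 + a_2, S(b_2) = b_2 + a_1, and S fixing all other basis vectors (S(a_j) = a_j for all j, S(b_j) = b_j for j ≠ 1, 2). Then: (1) S ∈ Sp(H, ω), and S preserves the ℤ-span of the basis; (2) (⋀^{i+2} S)(a_1∧b_1∧a_3∧⋯∧a_{i+2}) − a_1∧b_1∧a_3∧⋯∧a_{i+2} = a_1∧a_2∧a_3∧⋯∧a_{i+2}; and (3) the element a_1∧a_2∧⋯∧a_{i+2} is nonzero and satisfies C_{i+2}(a_1∧a_2∧⋯∧a_{i+2}) = 0. -/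

import Mathlib

/-!
Write `S = 1 + N` with `N x = x_{b₁} a₂ + x_{b₂} a₁`. Since `N` takes values in the span of the
`a_j`, which it kills, `N² = 0` and `S` is invertible; the two cross terms of `N` are symmetric in
`1 ↔ 2`, so their contributions to `ω(Sx, Sy) - ω(x, y)` cancel. On `a₁ ∧ b₁ ∧ a₃ ∧ ⋯ ∧ a_{i+2}`
the map `S` moves only the factor `b₁ ↦ b₁ + a₂`, so by multilinearity the difference is
`a₁ ∧ a₂ ∧ ⋯ ∧ a_{i+2}`. This wedge is nonzero because the `a_j` are linearly independent, and its
contraction vanishes term by term because the `a_j` span an isotropic subspace.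
-/

/-- The `2g`-dimensional rational vector space `H = ℚ^{2g}`, with basis indexed by
`Fin g ⊕ Fin g`: `Sum.inl j` corresponds to `a_{j+1}` and `Sum.inr j` to `b_{j+1}`. -/
abbrev HH (g : ℕ) : Type := (Fin g ⊕ Fin g) → ℚ

/-- The basis vector `a_{j+1}` of `H`. -/
def aa (g : ℕ) (j : Fin g) : HH g := Pi.single (Sum.inl j) 1

/-- The basis vector `b_{j+1}` of `H`. -/
def bb (g : ℕ) (j : Fin g) : HH g := Pi.single (Sum.inr j) 1

/-- The standard symplectic form `ω` on `H`. -/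
def omg (g : ℕ) (x y : HH g) : ℚ :=
  ∑ j : Fin g, (x (Sum.inl j) * y (Sum.inr j) - x (Sum.inr j) * y (Sum.inl j))

/-- The wedge `x_1 ∧ ⋯ ∧ x_k`, as an element of the `k`-th exterior power `⋀^k H`. -/
noncomputable def wedge (g k : ℕ) (v : Fin k → HH g) : ⋀[ℚ]^k (HH g) :=
  ⟨ExteriorAlgebra.ιMulti ℚ k v, ExteriorAlgebra.ιMulti_range ℚ k (Set.mem_range_self v)⟩

/-- Given a `k`-tuple `v` and indices `j < l`, the `(k-2)`-tuple obtained from `v` by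
omitting the entries at positions `j` and `l`. -/
def remove2 {α : Type*} {k : ℕ} (v : Fin k → α) (j l : Fin k) : Fin (k - 2) → α :=
  fun t => v ⟨if (t : ℕ) < (j : ℕ) then (t : ℕ)
      else if (t : ℕ) + 1 < (l : ℕ) then (t : ℕ) + 1 else (t : ℕ) + 2, by
    have ht := t.isLt
    have hl := l.isLt
    split_ifs <;> omega⟩

/-- The value `F(x_1, …, x_k) = Σ_{j<l} (-1)^{j+l+1} ω(x_j, x_l) ·
x_1 ∧ ⋯ ∧ x̂_j ∧ ⋯ ∧ x̂_l ∧ ⋯ ∧ x_k ∈ ⋀^{k-2} H`. (Indices are 0-based here, which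
yields the same signs as the 1-based formula.) -/
noncomputable def contractExpr (g k : ℕ) (v : Fin k → HH g) : ⋀[ℚ]^(k - 2) (HH g) :=
  ∑ p ∈ Finset.univ.filter (fun p : Fin k × Fin k => (p.1 : ℕ) < (p.2 : ℕ)),
    ((-1 : ℚ) ^ ((p.1 : ℕ) + (p.2 : ℕ) + 1) * omg g (v p.1) (v p.2)) •
      wedge g (k - 2) (remove2 v p.1 p.2)

/-- `IsContraction g k C` says that `C : ⋀^k H → ⋀^{k-2} H` is the contraction `C_k`,
i.e. the (unique) linear map satisfying the defining formula on wedges. -/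
def IsContraction (g k : ℕ) (C : ⋀[ℚ]^k (HH g) →ₗ[ℚ] ⋀[ℚ]^(k - 2) (HH g)) : Prop :=
  ∀ v : Fin k → HH g, C (wedge g k v) = contractExpr g k v

lemma mapAlg_mem (g k : ℕ) (S : HH g →ₗ[ℚ] HH g) {x : ExteriorAlgebra ℚ (HH g)}
    (hx : x ∈ ⋀[ℚ]^k (HH g)) : ExteriorAlgebra.map S x ∈ ⋀[ℚ]^k (HH g) := by
  rw [← ExteriorAlgebra.ιMulti_span_fixedDegree] at hx ⊢
  have h : Submodule.map (ExteriorAlgebra.map S).toLinearMap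
      (Submodule.span ℚ (Set.range (ExteriorAlgebra.ιMulti ℚ k))) ≤
      Submodule.span ℚ (Set.range (ExteriorAlgebra.ιMulti ℚ k (M := HH g))) := by
    rw [Submodule.map_span, Submodule.span_le]
    rintro _ ⟨_, ⟨v, rfl⟩, rfl⟩
    exact Submodule.subset_span ⟨S ∘ v, (ExteriorAlgebra.map_apply_ιMulti S v).symm⟩
  exact h (Submodule.mem_map_of_mem hx)

/-- The linear map `⋀^k S : ⋀^k H → ⋀^k H` induced by a linear map `S : H → H`. -/
noncomputable def powMap (g k : ℕ) (S : HH g →ₗ[ℚ] HH g) :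
    ⋀[ℚ]^k (HH g) →ₗ[ℚ] ⋀[ℚ]^k (HH g) :=
  (ExteriorAlgebra.map S).toLinearMap.restrict fun _ hx => mapAlg_mem g k S hx

lemma omg_add_smul_aa_left (g : ℕ) (x y : HH g) (c : ℚ) (l : Fin g) :
    omg g (x + c • aa g l) y = omg g x y + c * y (Sum.inr l) := by
  simp [omg, aa, Pi.single_apply, add_mul, Finset.sum_add_distrib]
  ring

lemma omg_add_smul_aa_right (g : ℕ) (x y : HH g) (c : ℚ) (l : Fin g) :
    omg g x (y + c • aa g l) = omg g x y - c * x (Sum.inr l) := by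
  simp [omg, aa, Pi.single_apply, mul_add, Finset.sum_add_distrib, sub_eq_add_neg]
  ring

lemma omg_aa_aa (g : ℕ) (j l : Fin g) : omg g (aa g j) (aa g l) = 0 := by
  simp [omg, aa, Pi.single_apply]

lemma linearIndependent_aa (g : ℕ) : LinearIndependent ℚ (aa g) := by
  have h : aa g = Pi.basisFun ℚ (Fin g ⊕ Fin g) ∘ Sum.inl := by
    funext j
    simp [aa]
  exact h ▸ (Pi.basisFun ℚ _).linearIndependent.comp Sum.inl Sum.inl_injective

def abShear (g : ℕ) (j k : Fin g) : Module.End ℚ (HH g) :=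
  (LinearMap.proj (Sum.inr j)).smulRight (aa g k) +
    (LinearMap.proj (Sum.inr k)).smulRight (aa g j)

section abShear

variable {g : ℕ} {j k : Fin g}

lemma abShear_apply (x : HH g) :
    abShear g j k x = x (Sum.inr j) • aa g k + x (Sum.inr k) • aa g j := rfl

@[simp]
lemma abShear_apply_inr (x : HH g) (l : Fin g) : abShear g j k x (Sum.inr l) = 0 := by
  simp [abShear_apply, aa]

lemma abShear_mul_self : abShear g j k * abShear g j k = 0 := by
  refine LinearMap.ext fun x => ?_
  rw [Module.End.mul_apply, abShear_apply (abShear g j k x)]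
  simp

lemma bijective_one_add_abShear :
    Function.Bijective (1 + abShear g j k : Module.End ℚ (HH g)) :=
  (Module.End.isUnit_iff _).mp <|
    IsNilpotent.isUnit_one_add ⟨2, by rw [pow_two, abShear_mul_self]⟩

lemma one_add_abShear_apply (x : HH g) : (1 + abShear g j k : Module.End ℚ (HH g)) x =
    x + x (Sum.inr j) • aa g k + x (Sum.inr k) • aa g j := by
  rw [LinearMap.add_apply, Module.End.one_apply, abShear_apply, add_assoc]

lemma omg_one_add_abShear (x y : HH g) :
    omg g ((1 + abShear g j k : Module.End ℚ (HH g)) x)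
      ((1 + abShear g j k : Module.End ℚ (HH g)) y) = omg g x y := by
  rw [one_add_abShear_apply, one_add_abShear_apply, omg_add_smul_aa_left, omg_add_smul_aa_left,
    omg_add_smul_aa_right, omg_add_smul_aa_right]
  simp [aa]
  ring

end abShear

section basisAction

variable {g : ℕ} {j k : Fin g} {S : HH g →ₗ[ℚ] HH g}

lemma eq_one_add_abShear (hjk : j ≠ k) (hSa : ∀ l, S (aa g l) = aa g l)
    (hSbj : S (bb g j) = bb g j + aa g k) (hSbk : S (bb g k) = bb g k + aa g j)
    (hSb : ∀ l, l ≠ j → l ≠ k → S (bb g l) = bb g l) :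
    S = 1 + abShear g j k := by
  refine (Pi.basisFun ℚ (Fin g ⊕ Fin g)).ext fun p => ?_
  rw [Pi.basisFun_apply, LinearMap.add_apply, Module.End.one_apply, abShear_apply]
  rcases p with l | l
  · change S (aa g l) = _
    rw [hSa]
    simp [aa]
  · change S (bb g l) = _
    by_cases hj : l = j
    · subst hj
      rw [hSbj]
      simp [bb, hjk.symm]
    by_cases hk : l = k
    · subst hk
      rw [hSbk]
      simp [bb, hj]
    · rw [hSb l hj hk]
      simp [bb, Ne.symm hj, Ne.symm hk]

lemma map_mem_span_int_single (hSa : ∀ l, S (aa g l) = aa g l)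
    (hSbj : S (bb g j) = bb g j + aa g k) (hSbk : S (bb g k) = bb g k + aa g j)
    (hSb : ∀ l, l ≠ j → l ≠ k → S (bb g l) = bb g l) {x : HH g}
    (hx : x ∈ Submodule.span ℤ (Set.range fun p : Fin g ⊕ Fin g => (Pi.single p 1 : HH g))) :
    S x ∈ Submodule.span ℤ (Set.range fun p : Fin g ⊕ Fin g => (Pi.single p 1 : HH g)) := by
  set P := Submodule.span ℤ (Set.range fun p : Fin g ⊕ Fin g => (Pi.single p 1 : HH g))
  have hmem (p : Fin g ⊕ Fin g) : (Pi.single p 1 : HH g) ∈ P := Submodule.subset_span ⟨p, rfl⟩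
  refine (Submodule.map_span_le (S.restrictScalars ℤ) _ P).mpr ?_ (Submodule.mem_map_of_mem hx)
  rintro _ ⟨l | l, rfl⟩
  · exact (hSa l).symm ▸ hmem (Sum.inl l)
  · change S (bb g l) ∈ P
    by_cases hj : l = j
    · exact hj ▸ hSbj ▸ add_mem (hmem _) (hmem _)
    by_cases hk : l = k
    · exact hk ▸ hSbk ▸ add_mem (hmem _) (hmem _)
    · exact (hSb l hj hk).symm ▸ hmem _

end basisAction

section wedge

variable {g k : ℕ}

lemma powMap_wedge (S : HH g →ₗ[ℚ] HH g) (v : Fin k → HH g) :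
    powMap g k S (wedge g k v) = wedge g k (S ∘ v) :=
  Subtype.ext (ExteriorAlgebra.map_apply_ιMulti S v)

lemma wedge_update_add (v : Fin k → HH g) (m : Fin k) (x y : HH g) :
    wedge g k (Function.update v m (x + y)) =
      wedge g k (Function.update v m x) + wedge g k (Function.update v m y) :=
  (exteriorPower.ιMulti ℚ k).map_update_add v m x y

lemma powMap_wedge_sub_wedge {S : HH g →ₗ[ℚ] HH g} {v : Fin k → HH g} {m : Fin k} {u : HH g}
    (hfix : ∀ t ≠ m, S (v t) = v t) (hm : S (v m) = v m + u) :
    powMap g k S (wedge g k v) - wedge g k v = wedge g k (Function.update v m u) := by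
  have hSv : S ∘ v = Function.update v m (v m + u) := by
    funext t
    rcases eq_or_ne t m with rfl | ht
    · simp [hm]
    · simp [Function.update_of_ne ht, hfix t ht]
  rw [powMap_wedge, hSv, wedge_update_add, Function.update_eq_self, add_sub_cancel_left]

lemma wedge_ne_zero_of_linearIndependent {v : Fin k → HH g} (hv : LinearIndependent ℚ v) :
    wedge g k v ≠ 0 := by
  -- the member of the independent family `ιMulti_family` indexed by all of `Fin k` is `wedge g k v`
  have := (exteriorPower.ιMulti_family_linearIndependent_field (n := k) hv).ne_zero
    (Set.powersetCard.ofFinEmbEquiv (OrderIso.refl (Fin k)).toOrderEmbedding)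
  simp only [exteriorPower.ιMulti_family, Equiv.symm_apply_apply] at this
  exact this

lemma contractExpr_eq_zero_of_isotropic {v : Fin k → HH g} (hv : ∀ s t, omg g (v s) (v t) = 0) :
    contractExpr g k v = 0 :=
  Finset.sum_eq_zero fun p _ => by rw [hv, mul_zero, zero_smul]

end wedge

/-- Let `1 ≤ i ≤ g - 2` and let `S : H → H` be the `ℚ`-linear map determined
by `S b_1 = b_1 + a_2`, `S b_2 = b_2 + a_1`, and `S` fixing all other basis vectors.  Then:
(1) `S` is a symplectic automorphism and preserves the `ℤ`-span of the basis;
(2) `(⋀^{i+2} S)(a_1∧b_1∧a_3∧⋯∧a_{i+2}) - a_1∧b_1∧a_3∧⋯∧a_{i+2} = a_1∧a_2∧⋯∧a_{i+2}`;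
(3) `a_1∧a_2∧⋯∧a_{i+2}` is nonzero and `C_{i+2} (a_1∧a_2∧⋯∧a_{i+2}) = 0`. -/
theorem statement5 (g : ℕ) (hg : 2 ≤ g) (i : ℕ) (hi2 : i ≤ g - 2)
    (S : HH g →ₗ[ℚ] HH g)
    (hSa : ∀ j, S (aa g j) = aa g j)
    (hSb1 : S (bb g ⟨0, by omega⟩) = bb g ⟨0, by omega⟩ + aa g ⟨1, by omega⟩)
    (hSb2 : S (bb g ⟨1, by omega⟩) = bb g ⟨1, by omega⟩ + aa g ⟨0, by omega⟩)
    (hSb : ∀ j : Fin g, (j : ℕ) ≠ 0 → (j : ℕ) ≠ 1 → S (bb g j) = bb g j)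
    (C : ⋀[ℚ]^(i + 2) (HH g) →ₗ[ℚ] ⋀[ℚ]^(i + 2 - 2) (HH g))
    (hC : IsContraction g (i + 2) C) :
    (Function.Bijective S ∧ (∀ x y, omg g (S x) (S y) = omg g x y) ∧
      ∀ x ∈ Submodule.span ℤ (Set.range fun p : Fin g ⊕ Fin g => (Pi.single p 1 : HH g)),
        S x ∈ Submodule.span ℤ (Set.range fun p : Fin g ⊕ Fin g => (Pi.single p 1 : HH g))) ∧
    (powMap g (i + 2) S (wedge g (i + 2) fun j =>
          if (j : ℕ) = 0 then aa g ⟨0, by omega⟩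
          else if (j : ℕ) = 1 then bb g ⟨0, by omega⟩
          else aa g ⟨(j : ℕ), by have := j.isLt; omega⟩) -
        wedge g (i + 2) (fun j =>
          if (j : ℕ) = 0 then aa g ⟨0, by omega⟩
          else if (j : ℕ) = 1 then bb g ⟨0, by omega⟩
          else aa g ⟨(j : ℕ), by have := j.isLt; omega⟩) =
      wedge g (i + 2) fun t => aa g ⟨(t : ℕ), by have := t.isLt; omega⟩) ∧
    (wedge g (i + 2) (fun t => aa g ⟨(t : ℕ), by have := t.isLt; omega⟩) ≠ 0 ∧
      C (wedge g (i + 2) fun t => aa g ⟨(t : ℕ), by have := t.isLt; omega⟩) = 0) := by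
  have hSb' (l : Fin g) (h0 : l ≠ ⟨0, by omega⟩) (h1 : l ≠ ⟨1, by omega⟩) :
      S (bb g l) = bb g l :=
    hSb l (fun h => h0 (Fin.ext h)) (fun h => h1 (Fin.ext h))
  have hS : S = 1 + abShear g _ _ := eq_one_add_abShear (by simp) hSa hSb1 hSb2 hSb'
  have hig : i + 2 ≤ g := by omega
  refine ⟨⟨hS ▸ bijective_one_add_abShear, hS ▸ omg_one_add_abShear,
    fun x => map_mem_span_int_single hSa hSb1 hSb2 hSb'⟩, ?_,
    wedge_ne_zero_of_linearIndependent
      ((linearIndependent_aa g).comp (Fin.castLE hig) (Fin.castLE_injective hig)),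
    (hC _).trans (contractExpr_eq_zero_of_isotropic fun _ _ => omg_aa_aa g _ _)⟩
  refine (powMap_wedge_sub_wedge (m := ⟨1, by omega⟩) (u := aa g ⟨1, by omega⟩) ?_ ?_).trans
    (congrArg _ ?_)
  · intro t ht
    have ht' : (t : ℕ) ≠ 1 := fun h => ht (Fin.ext h)
    simp only [ht', if_false]
    split_ifs <;> exact hSa _
  · exact hSb1
  · funext t
    rcases eq_or_ne t ⟨1, by omega⟩ with rfl | ht
    · simp
    · have ht' : (t : ℕ) ≠ 1 := fun h => ht (Fin.ext h)
      rw [Function.update_of_ne ht]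
      split_ifs with h0 <;> simp [h0]
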